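/- arXiv:2003.04337 — 4 statements merged into one kernel-verified Lean document; each statement's English description precedes it below -/
import Mathlib

section
/- Let ε_a, ε_b be real random variables with (ε_a, ε_b) having a joint density positive everywhere on ℝ². Define for (v_a, v_b) ∈ ℝ²: W(v_a,v_b) = P(v_b + ε_b < v_a + ε_a) and H(v_a, v_b)(y) = P(v_b + ε_b < v_a + ε_a ≤ y), i.e. P(v_b + ε_b < v_a + ε_a and v_a + ε_a ≤ y), for y ∈ ℝ. If W(v_a,v_b) = W(ṽ_a,ṽ_b) and H(v_a,v_b)(y) = H(ṽ_a,ṽ_b)(y) for all y, then v_a = ṽ_a and v_b = ṽ_b. -/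
open MeasureTheory Set
open scoped ENNReal NNReal

def royA (c t : ℝ) : Set (ℝ × ℝ) := {p | p.2 < c + p.1 ∧ p.1 ≤ t}

def royB (c : ℝ) : Set (ℝ × ℝ) := {p | p.2 < c + p.1}

lemma royA_meas (c t : ℝ) : MeasurableSet (royA c t) :=
  ((measurableSet_lt measurable_snd (measurable_const.add measurable_fst)).inter
    (measurableSet_le measurable_fst measurable_const))

lemma royB_meas (c : ℝ) : MeasurableSet (royB c) :=
  measurableSet_lt measurable_snd (measurable_const.add measurable_fst)

lemma royA_mono_c {c c' : ℝ} (h : c ≤ c') (t : ℝ) : royA c t ⊆ royA c' t := by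
  intro p hp; exact ⟨lt_of_lt_of_le hp.1 (by linarith), hp.2⟩

/-- positivity of the density measure on sets containing an open box -/
lemma roy_pos (f : ℝ × ℝ → ℝ≥0∞) (hfmeas : Measurable f) (hfpos : ∀ z, 0 < f z)
    {S : Set (ℝ × ℝ)} (hS : MeasurableSet S) {a b c d : ℝ} (hab : a < b) (hcd : c < d)
    (hsub : Ioo a b ×ˢ Ioo c d ⊆ S) : 0 < (volume : Measure (ℝ × ℝ)).withDensity f S := by
  rw [pos_iff_ne_zero]
  intro h0
  rw [withDensity_apply_eq_zero hfmeas] at h0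
  have huniv : {x : ℝ × ℝ | f x ≠ 0} = Set.univ := by
    ext x; simp [(hfpos x).ne']
  rw [huniv, Set.univ_inter] at h0
  have hle : (volume : Measure (ℝ × ℝ)) (Ioo a b ×ˢ Ioo c d) ≤ 0 := h0 ▸ measure_mono hsub
  have : (volume : Measure (ℝ × ℝ)) (Ioo a b ×ˢ Ioo c d)
      = ENNReal.ofReal (b - a) * ENNReal.ofReal (d - c) := by
    rw [Measure.volume_eq_prod, Measure.prod_prod, Real.volume_Ioo, Real.volume_Ioo]
  rw [this] at hle
  have h1 : (0:ℝ≥0∞) < ENNReal.ofReal (b - a) := by simp [ENNReal.ofReal_pos]; linarith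
  have h2 : (0:ℝ≥0∞) < ENNReal.ofReal (d - c) := by simp [ENNReal.ofReal_pos]; linarith
  exact absurd hle (ENNReal.mul_pos h1.ne' h2.ne').not_ge

/-- generic strictness: if a positive box fits in `S' \ S` (disjoint from S, inside S'),
and `S ⊆ S'`, then `ν S < ν S'`. -/
lemma roy_strict (f : ℝ × ℝ → ℝ≥0∞) (hfmeas : Measurable f) (hfpos : ∀ z, 0 < f z)
    (hfin : ∀ S : Set (ℝ × ℝ), (volume : Measure (ℝ × ℝ)).withDensity f S ≠ ⊤)
    {S S' : Set (ℝ × ℝ)} (hS : MeasurableSet S) (hS' : MeasurableSet S') (hsub : S ⊆ S')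
    {a b c d : ℝ} (hab : a < b) (hcd : c < d)
    (hboxin : Ioo a b ×ˢ Ioo c d ⊆ S') (hboxdisj : Disjoint S (Ioo a b ×ˢ Ioo c d)) :
    (volume : Measure (ℝ × ℝ)).withDensity f S
      < (volume : Measure (ℝ × ℝ)).withDensity f S' := by
  set ν := (volume : Measure (ℝ × ℝ)).withDensity f
  have hboxmeas : MeasurableSet (Ioo a b ×ˢ Ioo c d) :=
    measurableSet_Ioo.prod measurableSet_Ioo
  have hpos : 0 < ν (Ioo a b ×ˢ Ioo c d) :=
    roy_pos f hfmeas hfpos hboxmeas hab hcd (subset_refl _)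
  calc ν S < ν S + ν (Ioo a b ×ˢ Ioo c d) :=
        ENNReal.lt_add_right (hfin S) hpos.ne'
    _ = ν (S ∪ Ioo a b ×ˢ Ioo c d) := (measure_union hboxdisj hboxmeas).symm
    _ ≤ ν S' := measure_mono (Set.union_subset hsub hboxin)

lemma royA_strict_t (f : ℝ × ℝ → ℝ≥0∞) (hfmeas : Measurable f) (hfpos : ∀ z, 0 < f z)
    (hfin : ∀ S : Set (ℝ × ℝ), (volume : Measure (ℝ × ℝ)).withDensity f S ≠ ⊤)
    (c : ℝ) {t t' : ℝ} (h : t < t') :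
    (volume : Measure (ℝ × ℝ)).withDensity f (royA c t)
      < (volume : Measure (ℝ × ℝ)).withDensity f (royA c t') := by
  refine roy_strict f hfmeas hfpos hfin (royA_meas c t) (royA_meas c t')
    (fun p hp => ⟨hp.1, hp.2.trans h.le⟩) h (show c + t - 1 < c + t by linarith)
    ?_ ?_
  · rintro ⟨x, e⟩ ⟨hx, he⟩
    simp only [mem_Ioo] at hx he
    exact ⟨by simp; linarith [hx.1, he.2], by simpa using hx.2.le⟩
  · rw [Set.disjoint_left]
    rintro ⟨x, e⟩ hp hbox
    simp only [mem_prod, mem_Ioo] at hbox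
    exact absurd hp.2 (by simp; linarith [hbox.1.1])

lemma royA_strict_c (f : ℝ × ℝ → ℝ≥0∞) (hfmeas : Measurable f) (hfpos : ∀ z, 0 < f z)
    (hfin : ∀ S : Set (ℝ × ℝ), (volume : Measure (ℝ × ℝ)).withDensity f S ≠ ⊤)
    {c c' : ℝ} (h : c < c') (t : ℝ) :
    (volume : Measure (ℝ × ℝ)).withDensity f (royA c t)
      < (volume : Measure (ℝ × ℝ)).withDensity f (royA c' t) := by
  set δ := (c' - c) / 2 with hδ
  have hδpos : 0 < δ := by rw [hδ]; linarith
  refine roy_strict f hfmeas hfpos hfin (royA_meas c t) (royA_meas c' t)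
    (royA_mono_c h.le t) (show t - δ < t by linarith)
    (show c + t < c + t + δ by linarith) ?_ ?_
  · rintro ⟨x, e⟩ ⟨hx, he⟩
    simp only [mem_Ioo] at hx he
    have hc' : c' = c + 2 * δ := by rw [hδ]; ring
    exact ⟨show e < c' + x by linarith [he.2, hx.1], hx.2.le⟩
  · rw [Set.disjoint_left]
    rintro ⟨x, e⟩ hp hbox
    simp only [mem_prod, mem_Ioo] at hbox
    have h1 : e < c + x := hp.1
    linarith [hbox.1.2, hbox.2.1]

lemma royB_strict (f : ℝ × ℝ → ℝ≥0∞) (hfmeas : Measurable f) (hfpos : ∀ z, 0 < f z)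
    (hfin : ∀ S : Set (ℝ × ℝ), (volume : Measure (ℝ × ℝ)).withDensity f S ≠ ⊤)
    {c c' : ℝ} (h : c < c') :
    (volume : Measure (ℝ × ℝ)).withDensity f (royB c)
      < (volume : Measure (ℝ × ℝ)).withDensity f (royB c') := by
  set δ := (c' - c) / 2 with hδ
  have hδpos : 0 < δ := by rw [hδ]; linarith
  refine roy_strict f hfmeas hfpos hfin (royB_meas c) (royB_meas c')
    (fun p hp => by
      have h1 : p.2 < c + p.1 := hp
      show p.2 < c' + p.1
      linarith)
    (show (0:ℝ) < δ from hδpos) (show c + δ < c' by rw [hδ]; linarith) ?_ ?_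
  · rintro ⟨x, e⟩ ⟨hx, he⟩
    simp only [mem_Ioo] at hx he
    show e < c' + x
    linarith [he.2, hx.1]
  · rw [Set.disjoint_left]
    rintro ⟨x, e⟩ hp hbox
    simp only [mem_prod, mem_Ioo] at hbox
    have h1 : e < c + x := hp
    linarith [hbox.1.2, hbox.2.1]

/-- Key contradiction: if a shift `d > 0` relates the two H-functions and the W's agree,
we have a contradiction. -/
lemma roy_key (f : ℝ × ℝ → ℝ≥0∞) (hfmeas : Measurable f) (hfpos : ∀ z, 0 < f z)
    (hfin : ∀ S : Set (ℝ × ℝ), (volume : Measure (ℝ × ℝ)).withDensity f S ≠ ⊤)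
    (ca cb d : ℝ) (hd : 0 < d)
    (hH : ∀ t : ℝ, (volume : Measure (ℝ × ℝ)).withDensity f (royA ca (t + d))
        = (volume : Measure (ℝ × ℝ)).withDensity f (royA cb t))
    (hW : (volume : Measure (ℝ × ℝ)).withDensity f (royB ca)
        = (volume : Measure (ℝ × ℝ)).withDensity f (royB cb)) : False := by
  set ν := (volume : Measure (ℝ × ℝ)).withDensity f
  have hcc : ca < cb := by
    by_contra hle
    push_neg at hle
    have h1 : ν (royA ca 0) < ν (royA ca (0 + d)) :=
      royA_strict_t f hfmeas hfpos hfin ca (by linarith)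
    have h2 : ν (royA cb 0) ≤ ν (royA ca 0) := measure_mono (royA_mono_c hle 0)
    rw [hH 0] at h1
    exact absurd (lt_of_lt_of_le h1 h2) (lt_irrefl _)
  exact absurd hW (royB_strict f hfmeas hfpos hfin hcc).ne

/-- Roy model, Example 3: if `(ε_a, ε_b)` has an everywhere-positive joint
density on `ℝ²`, then matching the sector-choice probability `W` and the joint
distribution `H(·)(y)` for all `y` identifies both indices: `v_a = ṽ_a` and `v_b = ṽ_b`. -/
theorem stmt_5 {Ω : Type*} [MeasurableSpace Ω] (μ : Measure Ω) [IsProbabilityMeasure μ]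
    (εa εb : Ω → ℝ) (hεa : Measurable εa) (hεb : Measurable εb)
    (f : ℝ × ℝ → ℝ≥0∞) (hfmeas : Measurable f) (hfpos : ∀ z, 0 < f z)
    (hdens : μ.map (fun ω => (εa ω, εb ω)) = (volume : Measure (ℝ × ℝ)).withDensity f)
    (va vb wa wb : ℝ)
    (hW : μ {ω | vb + εb ω < va + εa ω} = μ {ω | wb + εb ω < wa + εa ω})
    (hH : ∀ y : ℝ, μ {ω | vb + εb ω < va + εa ω ∧ va + εa ω ≤ y}
        = μ {ω | wb + εb ω < wa + εa ω ∧ wa + εa ω ≤ y}) :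
    va = wa ∧ vb = wb := by
  set ν := (volume : Measure (ℝ × ℝ)).withDensity f with hν
  set T : Ω → ℝ × ℝ := fun ω => (εa ω, εb ω) with hT
  have hTmeas : Measurable T := hεa.prodMk hεb
  have hνprob : IsProbabilityMeasure ν := hdens ▸ Measure.isProbabilityMeasure_map hTmeas.aemeasurable
  have hfin : ∀ S : Set (ℝ × ℝ), ν S ≠ ⊤ := fun S => measure_ne_top ν S
  have hmap : ∀ S : Set (ℝ × ℝ), MeasurableSet S → μ (T ⁻¹' S) = ν S := by
    intro S hS
    show μ (T ⁻¹' S) = ν S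
    rw [← hdens, Measure.map_apply hTmeas hS]
  -- translate W
  have hW' : ν (royB (va - vb)) = ν (royB (wa - wb)) := by
    rw [← hmap _ (royB_meas _), ← hmap _ (royB_meas _)]
    have e1 : T ⁻¹' royB (va - vb) = {ω | vb + εb ω < va + εa ω} := by
      ext ω; simp only [Set.mem_preimage, royB, Set.mem_setOf_eq]
      constructor <;> intro <;> linarith
    have e2 : T ⁻¹' royB (wa - wb) = {ω | wb + εb ω < wa + εa ω} := by
      ext ω; simp only [Set.mem_preimage, royB, Set.mem_setOf_eq]
      constructor <;> intro <;> linarith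
    rw [e1, e2]; exact hW
  -- translate H
  have hH' : ∀ t : ℝ, ν (royA (va - vb) t) = ν (royA (wa - wb) (t + va - wa)) := by
    intro t
    rw [← hmap _ (royA_meas _ _), ← hmap _ (royA_meas _ _)]
    have e1 : T ⁻¹' royA (va - vb) t
        = {ω | vb + εb ω < va + εa ω ∧ va + εa ω ≤ t + va} := by
      ext ω; simp only [Set.mem_preimage, royA, Set.mem_setOf_eq]
      constructor <;> (intro h; exact ⟨by linarith [h.1], by linarith [h.2]⟩)
    have e2 : T ⁻¹' royA (wa - wb) (t + va - wa)
        = {ω | wb + εb ω < wa + εa ω ∧ wa + εa ω ≤ t + va} := by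
      ext ω; simp only [Set.mem_preimage, royA, Set.mem_setOf_eq]
      constructor <;> (intro h; exact ⟨by linarith [h.1], by linarith [h.2]⟩)
    rw [e1, e2]; exact hH (t + va)
  have hva : va = wa := by
    rcases lt_trichotomy va wa with h | h | h
    · exfalso
      refine roy_key f hfmeas hfpos hfin (va - vb) (wa - wb) (wa - va) (by linarith) ?_ hW'
      intro t
      have := hH' (t + (wa - va))
      convert this using 3 <;> ring
    · exact h
    · exfalso
      refine roy_key f hfmeas hfpos hfin (wa - wb) (va - vb) (va - wa) (by linarith) ?_ hW'.symm
      intro t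
      have := (hH' (t + va - wa + (wa - va))).symm
      convert this using 3 <;> ring
  refine ⟨hva, ?_⟩
  subst hva
  -- now identify vb
  have hH'' : ∀ t : ℝ, ν (royA (va - vb) t) = ν (royA (va - wb) t) := by
    intro t
    have := hH' t
    rwa [show t + va - va = t by ring] at this
  rcases lt_trichotomy (va - vb) (va - wb) with h | h | h
  · exact absurd (hH'' 0) (royA_strict_c f hfmeas hfpos hfin h 0).ne
  · linarith
  · exact absurd (hH'' 0).symm (royA_strict_c f hfmeas hfpos hfin h 0).ne
end

section
/- Let ε_a be a real random variable with strictly increasing CDF and suppose v_a - v_b = ṽ_a - ṽ_b =: δ. If P(ε_a - ε_b > -δ, v_a + ε_a ≤ y) = P(ε_a - ε_b > -δ, ṽ_a + ε_a ≤ y) for all y ∈ ℝ, and the conditional probability y ↦ P(ε_a - ε_b > -δ, ε_a ≤ y) is strictly increasing on ℝ with P(ε_a - ε_b > -δ) > 0, then v_a = ṽ_a (and hence v_b = ṽ_b). -/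
open MeasureTheory

/-! Since `P(A, v + ε ≤ y) = P(A, ε ≤ y - v)`, matching these probabilities at a single
level `y` equates the sub-distribution function `y ↦ P(A, ε ≤ y)` at `y - v` and `y - ṽ`;
its injectivity then forces `v = ṽ`. -/

theorem setOf_and_add_le_eq {Ω : Type*} (A : Ω → Prop) (X : Ω → ℝ) (c y : ℝ) :
    {ω | A ω ∧ c + X ω ≤ y} = {ω | A ω ∧ X ω ≤ y - c} :=
  Set.ext fun _ => and_congr_right fun _ => le_sub_iff_add_le'.symm

theorem eq_of_measure_and_add_le_eq {Ω : Type*} [MeasurableSpace Ω] (μ : Measure Ω)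
    (A : Ω → Prop) (X : Ω → ℝ) {a b : ℝ}
    (hinj : Function.Injective fun y : ℝ => μ {ω | A ω ∧ X ω ≤ y})
    (h : ∀ y : ℝ, μ {ω | A ω ∧ a + X ω ≤ y} = μ {ω | A ω ∧ b + X ω ≤ y}) :
    a = b := by
  have hshift : μ {ω | A ω ∧ X ω ≤ 0 - a} = μ {ω | A ω ∧ X ω ≤ 0 - b} := by
    simpa only [setOf_and_add_le_eq] using h 0
  simpa using hinj hshift

theorem stmt_7_general {Ω : Type*} [MeasurableSpace Ω] (μ : Measure Ω)
    (εa εb : Ω → ℝ)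
    (va vb wa wb δ : ℝ) (hδ : va - vb = δ) (hδ' : wa - wb = δ)
    (heq : ∀ y : ℝ, μ {ω | -δ < εa ω - εb ω ∧ va + εa ω ≤ y}
        = μ {ω | -δ < εa ω - εb ω ∧ wa + εa ω ≤ y})
    (hmono : StrictMono (fun y : ℝ => (μ {ω | -δ < εa ω - εb ω ∧ εa ω ≤ y}).toReal)) :
    va = wa ∧ vb = wb := by
  have hva : va = wa := eq_of_measure_and_add_le_eq μ _ εa
    (hmono.injective.of_comp (f := ENNReal.toReal)) heq
  exact ⟨hva, by linarith⟩

/-- second step of the Roy-model identification. Given matched index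
difference `δ = v_a - v_b = ṽ_a - ṽ_b`, if the joint probabilities
`P(ε_a - ε_b > -δ, v_a + ε_a ≤ y)` coincide for all `y`, and
`y ↦ P(ε_a - ε_b > -δ, ε_a ≤ y)` is strictly increasing with
`P(ε_a - ε_b > -δ) > 0`, then `v_a = ṽ_a` and `v_b = ṽ_b`. -/
theorem stmt_7 {Ω : Type*} [MeasurableSpace Ω] (μ : Measure Ω) [IsProbabilityMeasure μ]
    (εa εb : Ω → ℝ) (hεa : Measurable εa) (hεb : Measurable εb)
    (va vb wa wb δ : ℝ) (hδ : va - vb = δ) (hδ' : wa - wb = δ)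
    (heq : ∀ y : ℝ, μ {ω | -δ < εa ω - εb ω ∧ va + εa ω ≤ y}
        = μ {ω | -δ < εa ω - εb ω ∧ wa + εa ω ≤ y})
    (hmono : StrictMono (fun y : ℝ => (μ {ω | -δ < εa ω - εb ω ∧ εa ω ≤ y}).toReal))
    (hpos : 0 < μ {ω | -δ < εa ω - εb ω}) :
    va = wa ∧ vb = wb :=
  stmt_7_general μ εa εb va vb wa wb δ hδ hδ' heq hmono
end

section
/- Let ε be a real random variable and x ∈ ℝ. Suppose for two location-scale pairs the random variables v₁(x,1) + v₂(x,1)·ε and v₁(x̃,0) + v₂(x̃,0)·ε with positive scales have the same distribution, and ε is not almost surely constant. Then v₂(x,1) = v₂(x̃,0) and v₁(x,1) = v₁(x̃,0). -/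
/-!
Let `F` be the cdf of `ε`. Equality of the laws of `a + b ε` and `c + d ε` says that `F` is
invariant under the affine map `g s = (d / b) s + (c - a) / b`, and by symmetry we may take
`b ≤ d`. Since `F` is constant along orbits of `g`, `F s = 1` whenever `gⁿ s → ∞` and `F s = 0`
whenever `gⁿ s → -∞`. If `b < d`, then `g` expands away from its fixed point `p`, so `F` jumps
from `0` to `1` at `p` and `ε = p` almost surely. If `b = d` and `a ≠ c`, then `g` is a nontrivial
translation and `F` would be constant, contradicting its limits `0` and `1` at `∓∞`.
-/

open MeasureTheory ProbabilityTheory Filter Set Topology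

namespace ProbabilityTheory

variable {μ : Measure ℝ}

lemma cdf_eq_one_of_iterate_tendsto_atTop {g : ℝ → ℝ} (hg : cdf μ ∘ g = cdf μ) {s : ℝ}
    (hs : Tendsto (fun n ↦ g^[n] s) atTop atTop) : cdf μ s = 1 := by
  refine tendsto_nhds_unique ?_ ((tendsto_cdf_atTop (μ := μ)).comp hs)
  exact tendsto_const_nhds.congr fun n ↦ (congrFun (Function.iterate_invariant hg n) s).symm

lemma cdf_eq_zero_of_iterate_tendsto_atBot {g : ℝ → ℝ} (hg : cdf μ ∘ g = cdf μ) {s : ℝ}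
    (hs : Tendsto (fun n ↦ g^[n] s) atTop atBot) : cdf μ s = 0 := by
  refine tendsto_nhds_unique ?_ ((tendsto_cdf_atBot (μ := μ)).comp hs)
  exact tendsto_const_nhds.congr fun n ↦ (congrFun (Function.iterate_invariant hg n) s).symm

lemma cdf_comp_add_ne_self {β : ℝ} (hβ : β ≠ 0) : cdf μ ∘ (· + β) ≠ cdf μ := by
  intro h
  wlog hβ_pos : 0 < β generalizing β
  · refine this (neg_ne_zero.2 hβ) ?_ (by linarith [hβ.lt_or_gt.resolve_right hβ_pos])
    ext s
    simpa [sub_eq_add_neg] using (congrFun h (s - β)).symm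
  have hone : ∀ s, cdf μ s = 1 := fun s ↦ cdf_eq_one_of_iterate_tendsto_atTop h <| by
    simp only [add_right_iterate_apply, nsmul_eq_mul]
    exact tendsto_atTop_add_const_left _ s
      (tendsto_natCast_atTop_atTop.atTop_mul_const hβ_pos)
  have := tendsto_cdf_atBot (μ := μ)
  rw [show ⇑(cdf μ) = fun _ ↦ 1 from funext hone] at this
  exact one_ne_zero (tendsto_nhds_unique tendsto_const_nhds this)

lemma iterate_affine_apply {α β p : ℝ} (hp : α * p + β = p) (n : ℕ) (s : ℝ) :
    (fun x ↦ α * x + β)^[n] s = p + α ^ n * (s - p) := by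
  induction n with
  | zero => simp
  | succ n ih => rw [Function.iterate_succ_apply', ih]; linear_combination hp

lemma ae_eq_of_cdf_eq_zero_of_cdf_eq_one [IsProbabilityMeasure μ] {p : ℝ}
    (h0 : ∀ s < p, cdf μ s = 0) (h1 : ∀ s, p < s → cdf μ s = 1) : ∀ᵐ x ∂μ, x = p := by
  have hp : cdf μ p = 1 := by
    have hright := ((cdf μ).right_continuous p).mono_left (nhdsWithin_mono _ Ioi_subset_Ici_self)
    refine tendsto_nhds_unique hright (tendsto_const_nhds.congr' ?_)
    filter_upwards [self_mem_nhdsWithin] with s hs using (h1 s hs).symm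
  have hleft : Function.leftLim (cdf μ) p = 0 :=
    leftLim_eq_of_tendsto <| tendsto_const_nhds.congr' <| by
      filter_upwards [self_mem_nhdsWithin] with s hs using (h0 s hs).symm
  have hsingleton : μ {p} = 1 := by
    rw [← measure_cdf μ, StieltjesFunction.measure_singleton, hp, hleft]
    simp
  rw [ae_iff]
  exact (prob_compl_eq_zero_iff (measurableSet_singleton p)).2 hsingleton

lemma ae_eq_of_cdf_comp_affine_eq [IsProbabilityMeasure μ] {α β : ℝ} (hα : 1 < α)
    (h : cdf μ ∘ (fun x ↦ α * x + β) = cdf μ) : ∀ᵐ x ∂μ, x = β / (1 - α) := by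
  set p := β / (1 - α)
  have hp : α * p + β = p := by
    simp only [p]
    field_simp [sub_ne_zero.2 hα.ne]
    ring
  have hpow : Tendsto (fun n : ℕ ↦ α ^ n) atTop atTop := tendsto_pow_atTop_atTop_of_one_lt hα
  refine ae_eq_of_cdf_eq_zero_of_cdf_eq_one (fun s hs ↦ ?_) (fun s hs ↦ ?_)
  · refine cdf_eq_zero_of_iterate_tendsto_atBot h ?_
    simp only [iterate_affine_apply hp]
    exact tendsto_atBot_add_const_left _ p (hpow.atTop_mul_const_of_neg (by linarith))
  · refine cdf_eq_one_of_iterate_tendsto_atTop h ?_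
    simp only [iterate_affine_apply hp]
    exact tendsto_atTop_add_const_left _ p (hpow.atTop_mul_const (by linarith))

lemma cdf_map_affine [IsProbabilityMeasure μ] (a : ℝ) {b : ℝ} (hb : 0 < b) (t : ℝ) :
    cdf (μ.map (fun x ↦ a + b * x)) t = cdf μ ((t - a) / b) := by
  have hmeas : Measurable (fun x : ℝ ↦ a + b * x) := by fun_prop
  have := Measure.isProbabilityMeasure_map (μ := μ) hmeas.aemeasurable
  have hpre : (fun x ↦ a + b * x) ⁻¹' Iic t = Iic ((t - a) / b) := by
    ext x
    simp only [mem_preimage, mem_Iic, le_div_iff₀ hb]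
    constructor <;> intro <;> linarith
  rw [cdf_eq_real, cdf_eq_real, map_measureReal_apply hmeas measurableSet_Iic, hpre]

lemma eq_of_map_affine_eq_of_le [IsProbabilityMeasure μ] (hμ : ¬∃ p, ∀ᵐ x ∂μ, x = p)
    {a b c d : ℝ} (hb : 0 < b) (hbd : b ≤ d)
    (h : μ.map (fun x ↦ a + b * x) = μ.map (fun x ↦ c + d * x)) : b = d ∧ a = c := by
  have hd : 0 < d := hb.trans_le hbd
  have hcdf : cdf μ ∘ (fun s ↦ d / b * s + (c - a) / b) = cdf μ := by
    ext s
    have := cdf_map_affine (μ := μ) a hb (c + d * s)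
    rw [h, cdf_map_affine c hd, add_sub_cancel_left, mul_div_cancel_left₀ _ hd.ne'] at this
    rw [Function.comp_apply, this]
    congr 1
    field_simp
    ring
  rcases hbd.lt_or_eq with hlt | rfl
  · exact (hμ ⟨_, ae_eq_of_cdf_comp_affine_eq ((one_lt_div hb).2 hlt) hcdf⟩).elim
  · refine ⟨rfl, ?_⟩
    by_contra hac
    refine cdf_comp_add_ne_self (μ := μ) (div_ne_zero (sub_ne_zero.2 (Ne.symm hac)) hb.ne') ?_
    simpa [div_self hb.ne'] using hcdf

lemma eq_of_map_affine_eq [IsProbabilityMeasure μ] (hμ : ¬∃ p, ∀ᵐ x ∂μ, x = p)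
    {a b c d : ℝ} (hb : 0 < b) (hd : 0 < d)
    (h : μ.map (fun x ↦ a + b * x) = μ.map (fun x ↦ c + d * x)) : b = d ∧ a = c := by
  rcases le_total b d with hbd | hdb
  · exact eq_of_map_affine_eq_of_le hμ hb hbd h
  · obtain ⟨hdb, hca⟩ := eq_of_map_affine_eq_of_le hμ hd hdb h.symm
    exact ⟨hdb.symm, hca.symm⟩

end ProbabilityTheory

/-- Example 1 variant: if `v₁(x,1) + v₂(x,1)·ε` and
`v₁(x̃,0) + v₂(x̃,0)·ε` with positive scales have the same distribution and `ε` is not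
almost surely constant, then the scales and locations coincide. -/
theorem stmt_14 {Ω : Type*} [MeasurableSpace Ω] (μ : Measure Ω) [IsProbabilityMeasure μ]
    (ε : Ω → ℝ) (hε : Measurable ε)
    (v₁x1 v₂x1 v₁x0 v₂x0 : ℝ) (hb : 0 < v₂x1) (hd : 0 < v₂x0)
    (hdist : μ.map (fun ω => v₁x1 + v₂x1 * ε ω) = μ.map (fun ω => v₁x0 + v₂x0 * ε ω))
    (hnondeg : ¬ ∃ r : ℝ, ∀ᵐ ω ∂μ, ε ω = r) :
    v₂x1 = v₂x0 ∧ v₁x1 = v₁x0 := by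
  have := Measure.isProbabilityMeasure_map (μ := μ) hε.aemeasurable
  refine eq_of_map_affine_eq (μ := μ.map ε) (fun ⟨r, hr⟩ ↦ hnondeg ⟨r, ?_⟩) hb hd ?_
  · exact ae_of_ae_map hε.aemeasurable hr
  · rwa [Measure.map_map (by fun_prop) hε, Measure.map_map (by fun_prop) hε]
end

section
/- In the multinomial choice model Y = argmax_{j=0,...,J} (v_j + ε_j) with v₀ = 0, ε₀ = 0, if ε = (ε₁,...,ε_J) has a density positive everywhere on ℝᴶ conditional on U = u, then the map v ∈ ℝᴶ ↦ (P(v_j + ε_j ≥ v_{j'} + ε_{j'} ∀ j' | U=u))_{j=1,...,J} ∈ ℝᴶ is injective. -/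
/-!
Suppose `v ≠ w`, say with `v - w` attaining a positive maximum on the set `A` of alternatives.
Raising every index in `A` by the same maximal amount and all others by less can only move the
choice into `A`, so the event "the choice lies in `A`" grows from `w` to `v`. It grows strictly:
on a box of shocks of positive Lebesgue measure, hence of positive probability, alternative `0`
is chosen under `w` and the maximiser of `v - w` under `v`. Since ties are Lebesgue-null, the
probability of that event is the sum of the choice probabilities over `A`, so these cannot all
agree.
-/

open MeasureTheory Set Function
open scoped ENNReal

lemma addHaar_preimage_singleton_eq_zero {E : Type*} [NormedAddCommGroup E] [NormedSpace ℝ E]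
    [MeasurableSpace E] [BorelSpace E] [FiniteDimensional ℝ E] (μ : Measure E)
    [μ.IsAddHaarMeasure] {ℓ : E →ₗ[ℝ] ℝ} (hℓ : ℓ ≠ 0) (c : ℝ) : μ (ℓ ⁻¹' {c}) = 0 := by
  obtain ⟨x, rfl⟩ := LinearMap.surjective_of_ne_zero hℓ c
  have hker : LinearMap.ker ℓ ≠ ⊤ := fun h => hℓ (LinearMap.ker_eq_top.mp h)
  have hfiber : ℓ ⁻¹' {ℓ x} = (fun y => -x + y) ⁻¹' (LinearMap.ker ℓ : Set E) := by
    ext y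
    simp only [mem_preimage, mem_singleton_iff, SetLike.mem_coe, LinearMap.mem_ker, map_add,
      map_neg]
    constructor <;> intro h <;> linarith
  rw [hfiber, measure_preimage_add]
  exact Measure.addHaar_submodule μ _ hker

lemma volume_sub_eval_preimage_singleton_eq_zero {ι : Type*} [Fintype ι] {j j' : ι}
    (h : j ≠ j') (c : ℝ) : volume {e : ι → ℝ | e j - e j' = c} = 0 := by
  classical
  let ℓ : (ι → ℝ) →ₗ[ℝ] ℝ := LinearMap.proj (R := ℝ) (φ := fun _ => ℝ) j - LinearMap.proj j'
  have hℓ : ℓ ≠ 0 := by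
    intro h0
    simpa [ℓ, Pi.single_eq_of_ne' h] using LinearMap.congr_fun h0 (Pi.single j 1)
  exact addHaar_preimage_singleton_eq_zero volume hℓ c

section Choice

variable {ι : Type*}

/-- The outside alternative, not indexed by `ι`, has index and shock `0`. -/
def choiceSet (u : ι → ℝ) (j : ι) : Set (ι → ℝ) :=
  {e | (∀ j', u j' + e j' ≤ u j + e j) ∧ 0 ≤ u j + e j}

lemma measurableSet_choiceSet [Countable ι] (u : ι → ℝ) (j : ι) :
    MeasurableSet (choiceSet u j) := by
  simp only [choiceSet, ofPred_and, ofPred_forall]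
  exact (MeasurableSet.iInter fun j' => measurableSet_le (by fun_prop) (by fun_prop)).inter
    (measurableSet_le (by fun_prop) (by fun_prop))

lemma volume_choiceSet_inter_eq_zero [Fintype ι] (u : ι → ℝ) {j j' : ι} (h : j ≠ j') :
    volume (choiceSet u j ∩ choiceSet u j') = 0 := by
  refine measure_mono_null ?_ (volume_sub_eval_preimage_singleton_eq_zero h (u j' - u j))
  rintro e ⟨⟨hj, -⟩, ⟨hj', -⟩⟩
  have := hj j'
  have := hj' j
  simp only [mem_ofPred_eq]
  linarith

lemma choiceSet_subset_of_forall_sub_le {v w : ι → ℝ} {j : ι}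
    (hmax : ∀ k, v k - w k ≤ v j - w j) (hpos : 0 ≤ v j - w j) :
    choiceSet w j ⊆ choiceSet v j := by
  rintro e ⟨he, he₀⟩
  refine ⟨fun k => ?_, by linarith⟩
  linarith [he k, hmax k]

lemma exists_volume_ne_zero_subset_choiceSet [Fintype ι] {v w : ι → ℝ} {j : ι} (h : w j < v j) :
    ∃ O : Set (ι → ℝ), MeasurableSet O ∧ volume O ≠ 0 ∧ O ⊆ choiceSet v j ∧
      ∀ k, Disjoint O (choiceSet w k) := by
  classical
  let m : ι → ℝ := fun k => min (-v k) (-w k)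
  let a : ι → ℝ := fun k => if k = j then -v j else m k - 1
  let b : ι → ℝ := fun k => if k = j then -w j else m k
  have hab : ∀ k, a k < b k := by
    intro k
    by_cases hk : k = j <;> simp only [a, b, hk, if_true, if_false] <;> linarith
  have hlow : ∀ e ∈ univ.pi fun k => Ioo (a k) (b k), ∀ k, w k + e k < 0 := by
    intro e he k
    have hek := (mem_univ_pi.mp he k).2
    by_cases hk : k = j
    · subst hk
      simp only [b, if_true] at hek
      linarith
    · simp only [b, hk, if_false] at hek
      linarith [min_le_right (-v k) (-w k)]
  refine ⟨univ.pi fun k => Ioo (a k) (b k), .univ_pi fun _ => measurableSet_Ioo, ?_, ?_, ?_⟩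
  · rw [volume_pi_pi, Finset.prod_ne_zero_iff]
    intro k _
    rw [Real.volume_Ioo]
    exact (ENNReal.ofReal_pos.mpr (sub_pos.mpr (hab k))).ne'
  · intro e he
    have hej : -v j < e j := by simpa [a] using (mem_univ_pi.mp he j).1
    refine ⟨fun k => ?_, by linarith⟩
    by_cases hk : k = j
    · rw [hk]
    · have hek : e k < m k := by simpa [b, hk] using (mem_univ_pi.mp he k).2
      linarith [min_le_left (-v k) (-w k)]
  · intro k
    rw [disjoint_left]
    intro e he hek
    linarith [hlow e he k, hek.2]

variable [Fintype ι] (ν : Measure (ι → ℝ)) [IsFiniteMeasure ν]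

lemma exists_sum_measure_choiceSet_lt (h₁ : ν ≪ volume) (h₂ : volume ≪ ν) {v w : ι → ℝ}
    {j₀ : ι} (hlt : w j₀ < v j₀) :
    ∃ A : Finset ι, ∑ j ∈ A, ν (choiceSet w j) < ∑ j ∈ A, ν (choiceSet v j) := by
  classical
  obtain ⟨js, -, hjs⟩ :=
    Finset.exists_max_image Finset.univ (fun j => v j - w j) ⟨j₀, Finset.mem_univ _⟩
  have hmax : ∀ k, v k - w k ≤ v js - w js := fun k => hjs k (Finset.mem_univ k)
  have hpos : 0 < v js - w js := by linarith [hmax j₀]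
  let A := Finset.univ.filter fun j => v j - w j = v js - w js
  have hsub : ∀ j ∈ A, choiceSet w j ⊆ choiceSet v j := by
    intro j hjA
    have hj : v j - w j = v js - w js := (Finset.mem_filter.mp hjA).2
    exact choiceSet_subset_of_forall_sub_le (hj ▸ hmax) (by linarith)
  obtain ⟨O, hOmeas, hO, hOv, hOw⟩ :=
    exists_volume_ne_zero_subset_choiceSet (j := js) (v := v) (w := w) (by linarith)
  have hdisj : (A : Set ι).Pairwise (AEDisjoint ν on choiceSet w) :=
    fun j _ k _ hjk => h₁ (volume_choiceSet_inter_eq_zero w hjk)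
  refine ⟨A, ?_⟩
  calc ∑ j ∈ A, ν (choiceSet w j)
      = ν (⋃ j ∈ A, choiceSet w j) :=
        (measure_biUnion_finset₀ hdisj fun j _ =>
          (measurableSet_choiceSet w j).nullMeasurableSet).symm
    _ < ν (⋃ j ∈ A, choiceSet w j) + ν O :=
        ENNReal.lt_add_right (measure_ne_top ν _) fun h => hO (h₂ h)
    _ = ν ((⋃ j ∈ A, choiceSet w j) ∪ O) :=
        (measure_union (disjoint_iUnion₂_left.mpr fun k _ => (hOw k).symm) hOmeas).symm
    _ ≤ ν (⋃ j ∈ A, choiceSet v j) :=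
        measure_mono <| union_subset (iUnion₂_mono hsub) <|
          hOv.trans (subset_biUnion_of_mem (u := fun j => choiceSet v j) (by simp [A]))
    _ ≤ ∑ j ∈ A, ν (choiceSet v j) := measure_biUnion_finset_le A _

theorem injective_measure_choiceSet (h₁ : ν ≪ volume) (h₂ : volume ≪ ν) :
    Injective fun (v : ι → ℝ) j => ν (choiceSet v j) := by
  intro v w hvw
  by_contra hne
  obtain ⟨j₀, hj₀⟩ := ne_iff.mp hne
  have hsum : ∀ A : Finset ι, ∑ j ∈ A, ν (choiceSet v j) = ∑ j ∈ A, ν (choiceSet w j) :=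
    fun A => Finset.sum_congr rfl fun j _ => congrFun hvw j
  rcases hj₀.lt_or_gt with hlt | hlt
  · obtain ⟨A, hA⟩ := exists_sum_measure_choiceSet_lt ν h₁ h₂ hlt
    exact hA.ne (hsum A)
  · obtain ⟨A, hA⟩ := exists_sum_measure_choiceSet_lt ν h₁ h₂ hlt
    exact hA.ne (hsum A).symm

end Choice

/-- Example 2: in the multinomial choice model with `v₀ = 0`, `ε₀ = 0`,
if `ε = (ε₁,...,ε_J)` has an everywhere-positive density on `ℝᴶ` (conditional on
`U = u`, here represented by the probability measure `μ`), the map from the index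
vector `v` to the vector of choice probabilities is injective. -/
theorem stmt_17 {J : ℕ} {Ω : Type*} [MeasurableSpace Ω] (μ : Measure Ω)
    [IsProbabilityMeasure μ]
    (ε : Ω → (Fin J → ℝ)) (hε : Measurable ε)
    (f : (Fin J → ℝ) → ℝ≥0∞) (hfmeas : Measurable f) (hfpos : ∀ e, 0 < f e)
    (hdens : μ.map ε = (volume : Measure (Fin J → ℝ)).withDensity f) :
    Function.Injective (fun v : Fin J → ℝ => fun j : Fin J =>
      (μ {ω | (∀ j' : Fin J, v j' + ε ω j' ≤ v j + ε ω j) ∧ 0 ≤ v j + ε ω j}).toReal) := by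
  have hlaw : ∀ v j, μ {ω | (∀ j', v j' + ε ω j' ≤ v j + ε ω j) ∧ 0 ≤ v j + ε ω j}
      = μ.map ε (choiceSet v j) :=
    fun v j => (Measure.map_apply hε (measurableSet_choiceSet v j)).symm
  have h₁ : μ.map ε ≪ volume := hdens ▸ withDensity_absolutelyContinuous _ _
  have h₂ : volume ≪ μ.map ε := hdens ▸
    withDensity_absolutelyContinuous' hfmeas.aemeasurable (ae_of_all _ fun e => (hfpos e).ne')
  intro v w hvw
  refine injective_measure_choiceSet (μ.map ε) h₁ h₂ (funext fun j => ?_)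
  have := congrFun hvw j
  simp only [hlaw] at this
  exact (ENNReal.toReal_eq_toReal_iff' (measure_ne_top _ _) (measure_ne_top _ _)).mp this
end
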